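/- arXiv:2604.10388 — 2 statements merged into one kernel-verified Lean document; each statement's English description precedes it below -/
import Mathlib

section
/- Let R be a ring and let 0 → M′ →^f M →^g M″ → 0 be a short exact sequence of left R-modules (f injective, g surjective, im f = ker g). Let D′ : M′ → M′, D : M → M and D″ : M″ → M″ be R-linear maps satisfying f ∘ D′ = D ∘ f and g ∘ D = D″ ∘ g. Assume D ∘ D = 0 and ker D″ = im D″. Then the induced sequence 0 → ker D′ → ker D → ker D″ → 0 is exact: f restricts to an injective map ker D′ → ker D whose image equals the kernel of the restriction of g to ker D, and g restricts to a surjective map ker D → ker D″. -/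
/-- Abstract form of Lemma 3.3 of the paper: given a short exact sequence
`0 → M′ →f M →g M″ → 0` of `R`-modules with compatible endomorphisms `D′, D, D″`
such that `D ∘ D = 0` and `ker D″ = im D″`, the induced sequence of kernels
`0 → ker D′ → ker D → ker D″ → 0` is exact. -/
theorem stmt2 {R M' M M'' : Type*} [Ring R]
    [AddCommGroup M'] [Module R M'] [AddCommGroup M] [Module R M]
    [AddCommGroup M''] [Module R M'']
    (f : M' →ₗ[R] M) (g : M →ₗ[R] M'')
    (hf : Function.Injective f) (hg : Function.Surjective g)
    (hfg : LinearMap.range f = LinearMap.ker g)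
    (D' : M' →ₗ[R] M') (D : M →ₗ[R] M) (D'' : M'' →ₗ[R] M'')
    (hcomm1 : f ∘ₗ D' = D ∘ₗ f) (hcomm2 : g ∘ₗ D = D'' ∘ₗ g)
    (hDD : D ∘ₗ D = 0)
    (hker : LinearMap.ker D'' = LinearMap.range D'') :
    (∀ u, D' u = 0 → D (f u) = 0) ∧
    (∀ u u', D' u = 0 → D' u' = 0 → f u = f u' → u = u') ∧
    (∀ v, (D v = 0 ∧ g v = 0) ↔ ∃ u, D' u = 0 ∧ f u = v) ∧
    (∀ w, D'' w = 0 → ∃ v, D v = 0 ∧ g v = w) := by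
  have hc1 : ∀ u, f (D' u) = D (f u) := fun u => congrFun (congrArg (↑·) hcomm1) u
  have hc2 : ∀ v, g (D v) = D'' (g v) := fun v => congrFun (congrArg (↑·) hcomm2) v
  refine ⟨?_, ?_, ?_, ?_⟩
  · intro u hu
    rw [← hc1, hu, map_zero]
  · intro u u' _ _ h
    exact hf h
  · intro v
    constructor
    · rintro ⟨hDv, hgv⟩
      have : v ∈ LinearMap.range f := by rw [hfg]; exact hgv
      obtain ⟨u, rfl⟩ := this
      refine ⟨u, ?_, rfl⟩
      apply hf
      rw [hc1, hDv, map_zero]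
    · rintro ⟨u, hu, rfl⟩
      refine ⟨by rw [← hc1, hu, map_zero], ?_⟩
      have : f u ∈ LinearMap.ker g := hfg ▸ LinearMap.mem_range_self f u
      exact this
  · intro w hw
    have : w ∈ LinearMap.range D'' := hker ▸ hw
    obtain ⟨w', rfl⟩ := this
    obtain ⟨v', rfl⟩ := hg w'
    refine ⟨D v', ?_, hc2 v'⟩
    exact congrFun (congrArg (↑·) hDD) v'
end

section
/- Let A be an associative ℂ-algebra, let a ∈ ℂ, and let f₁, f₂, g₁, g₂, r₁, r₂ ∈ A satisfy the relations: f₂g₂ = −(a−1)((a−1)(a+1)r₂ + 2r₁); g₂f₂ = (a+3)((a+3)(a+1)r₂ + 2r₁); g₂f₁ = (a+3)²r₁ and g₁f₂ = −(a+3)²r₁; f₂g₁ = (a−1)²r₁ and f₁g₂ = −(a−1)²r₁; f₁g₁ = 0 = g₁f₁. Let α, α̃, β, β̃ ∈ ℂ be scalars with (α̃ − β̃ + β − α)(a−1)(a+3) = 8. Then (a+3)²·(f₂ + β̃f₁)(g₂ + α̃g₁) + (a−1)²·(g₂ + αg₁)(f₂ + βf₁) = 0. -/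
/-- The computation at the heart of Proposition 4.7 of the paper: given the relations of
Proposition 4.6 among `f₁, f₂, g₁, g₂, r₁, r₂` in an associative (not necessarily unital)
`ℂ`-algebra, and scalars with `(α̃ - β̃ + β - α)(a-1)(a+3) = 8`, the quadratic relation
`(a+3)² (f₂ + β̃ f₁)(g₂ + α̃ g₁) + (a-1)² (g₂ + α g₁)(f₂ + β f₁) = 0` holds. -/
theorem stmt3 {A : Type*} [NonUnitalRing A] [Module ℂ A]
    [SMulCommClass ℂ A A] [IsScalarTower ℂ A A]
    (a : ℂ) (f₁ f₂ g₁ g₂ r₁ r₂ : A)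
    (h1 : f₂ * g₂ = (-(a - 1)) • (((a - 1) * (a + 1)) • r₂ + (2 : ℂ) • r₁))
    (h2 : g₂ * f₂ = (a + 3) • (((a + 3) * (a + 1)) • r₂ + (2 : ℂ) • r₁))
    (h3 : g₂ * f₁ = ((a + 3) ^ 2) • r₁)
    (h4 : g₁ * f₂ = (-(a + 3) ^ 2) • r₁)
    (h5 : f₂ * g₁ = ((a - 1) ^ 2) • r₁)
    (h6 : f₁ * g₂ = (-(a - 1) ^ 2) • r₁)
    (h7 : f₁ * g₁ = 0) (h8 : g₁ * f₁ = 0)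
    (α α' β β' : ℂ)
    (hcoef : (α' - β' + β - α) * (a - 1) * (a + 3) = 8) :
    ((a + 3) ^ 2) • ((f₂ + β' • f₁) * (g₂ + α' • g₁))
      + ((a - 1) ^ 2) • ((g₂ + α • g₁) * (f₂ + β • f₁)) = 0 := by
  simp only [mul_add, add_mul, smul_mul_assoc, mul_smul_comm, h1, h2, h3, h4, h5, h6,
    h7, h8, smul_zero, zero_add, add_zero, smul_add, smul_smul]
  match_scalars <;> first
    | ring1
    | linear_combination ((a - 1) * (a + 3)) * hcoef
end
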